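/- arXiv:2404.10925 — 3 statements merged into one kernel-verified Lean document; each statement's English description precedes it below -/
import Mathlib

section
/- Define ζ on pairs of an opposite-codegeneracy generator and an adjacent transposition by: ζ(∂_i^n, χ_j^n) = (χ_{j+1}^{n+1}, ∂_i^n) if i < j; (χ_{i+1}^{n+1}χ_i^{n+1}, ∂_{i+1}^n) if i = j; (χ_{i−1}^{n+1}χ_i^{n+1}, ∂_{i−1}^n) if i = j+1; (χ_j^{n+1}, ∂_i^n) if i > j+1. Then ζ respects the Coxeter relation χ_j χ_k = χ_k χ_j for |j − k| ≥ 2: applying ζ successively to ∂_i^n past χ_j^n χ_k^n and past χ_k^n χ_j^n yields equal elements of S_{n+2} paired with equal generators ∂. -/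
/-- The adjacent transposition `(k, k+1)` in `Perm (Fin m)` (and `1` if out of range). -/
def swapF (m k : ℕ) : Equiv.Perm (Fin m) :=
  if h : k + 1 < m then Equiv.swap ⟨k, by omega⟩ ⟨k + 1, h⟩ else 1

/-- One step of the distributive law `ζ`: moving `∂_i^n` past `χ_j^n` produces an element of
`S_{n+2}` together with a new `∂`-subscript:
`ζ(∂_i^n, χ_j^n) = (χ_{j+1}^{n+1}, ∂_i^n)` if `i < j`;
`(χ_{i+1}^{n+1} χ_i^{n+1}, ∂_{i+1}^n)` if `i = j`;
`(χ_{i-1}^{n+1} χ_i^{n+1}, ∂_{i-1}^n)` if `i = j+1`;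
`(χ_j^{n+1}, ∂_i^n)` if `i > j+1`. -/
def zetaStep (n i j : ℕ) : Equiv.Perm (Fin (n + 2)) × ℕ :=
  if i < j then (swapF (n + 2) (j + 1), i)
  else if i = j then (swapF (n + 2) (i + 1) * swapF (n + 2) i, i + 1)
  else if i = j + 1 then (swapF (n + 2) (i - 1) * swapF (n + 2) i, i - 1)
  else (swapF (n + 2) j, i)

/-- `ζ` applied to `∂_i^n` through a word in the `χ`'s (listed left to right): `∂` moves through
the leftmost letter first, and the produced group elements are multiplied in order. -/
def zetaWord (n : ℕ) : ℕ → List ℕ → Equiv.Perm (Fin (n + 2)) × ℕ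
  | i, [] => (1, i)
  | i, a :: rest =>
      let p := zetaStep n i a
      let q := zetaWord n p.2 rest
      (p.1 * q.1, q.2)


lemma swap_commute' {α : Type*} [DecidableEq α] {a b c d : α}
    (h1 : a ≠ c) (h2 : a ≠ d) (h3 : b ≠ c) (h4 : b ≠ d) :
    Commute (Equiv.swap a b) (Equiv.swap c d) := by
  have : (Equiv.swap a b).Disjoint (Equiv.swap c d) := by
    intro x
    by_cases hx : x = a ∨ x = b
    · right
      rcases hx with rfl | rfl <;> exact Equiv.swap_apply_of_ne_of_ne (by tauto) (by tauto)
    · left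
      push_neg at hx
      exact Equiv.swap_apply_of_ne_of_ne hx.1 hx.2
  exact this.commute

lemma swapF_commute (m a b : ℕ) (h : a + 2 ≤ b) : Commute (swapF m a) (swapF m b) := by
  unfold swapF
  split_ifs with h1 h2 h2
  · apply swap_commute' <;> simp [Fin.ext_iff] <;> omega
  · exact Commute.one_right _
  · exact Commute.one_left _
  · exact Commute.one_left _

set_option maxHeartbeats 2000000 in
lemma zeta_key (n i j k : ℕ) (hjk : j + 2 ≤ k) :
    zetaWord n i [j, k] = zetaWord n i [k, j] := by
  have C := swapF_commute (n + 2)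
  simp only [zetaWord, zetaStep]
  split_ifs <;>
    first
      | (exfalso; omega)
      | (dsimp only
         simp only [Prod.mk.injEq, mul_one, and_true]
         first
           | refine ⟨?_, by omega⟩
           | skip
         first
           | rfl
           | (refine (C _ _ ?_).eq; omega)
           | (refine (C _ _ ?_).symm.eq; omega)
           | (refine (Commute.mul_left (C _ _ ?_) (C _ _ ?_)).eq <;> omega)
           | (refine (Commute.mul_left (C _ _ ?_) (C _ _ ?_)).symm.eq <;> omega)
           | (refine (Commute.mul_right (C _ _ ?_) (C _ _ ?_)).eq <;> omega)
           | (refine (Commute.mul_right (C _ _ ?_) (C _ _ ?_)).symm.eq <;> omega))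

/-- `ζ` respects the commuting Coxeter relation `χ_j χ_k = χ_k χ_j` for `|j - k| ≥ 2`:
moving `∂_i^n` through `χ_j^n χ_k^n` and through `χ_k^n χ_j^n` yields the same element of
`S_{n+2}` paired with the same `∂`-generator. -/
theorem zeta_respects_commutation (n i j k : ℕ) (hi : i ≤ n) (hj : j + 1 ≤ n) (hk : k + 1 ≤ n)
    (hjk : j + 2 ≤ k ∨ k + 2 ≤ j) :
    zetaWord n i [j, k] = zetaWord n i [k, j] := by
  rcases hjk with h | h
  · exact zeta_key n i j k h
  · exact (zeta_key n i k j h).symm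
end

section
/- With ζ as defined (ζ(∂_i^n, χ_j^n) given by the four cases depending on the position of i relative to j), ζ respects the braid relation: for all 0 ≤ i ≤ n and 0 ≤ j ≤ n−2, applying ζ successively to ∂_i^n through the word χ_j^n χ_{j+1}^n χ_j^n gives the same result (as a pair of an element of S_{n+2} and a ∂-generator) as applying it through χ_{j+1}^n χ_j^n χ_{j+1}^n. -/
lemma swapF_comm (m a b : ℕ) (h : a + 2 ≤ b) : swapF m a * swapF m b = swapF m b * swapF m a := by
  unfold swapF
  split_ifs with h1 h2 h2
  · rw [Equiv.mul_swap_eq_swap_mul]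
    congr 1
    congr 1 <;>
    · rw [Equiv.swap_apply_of_ne_of_ne] <;> simp [Fin.ext_iff] <;> omega
  · simp
  · simp
  · simp

lemma swapF_braid (m k : ℕ) (h : k + 2 < m) :
    swapF m k * swapF m (k + 1) * swapF m k = swapF m (k + 1) * swapF m k * swapF m (k + 1) := by
  unfold swapF
  rw [dif_pos (by omega : k + 1 < m), dif_pos (by omega : k + 1 + 1 < m)]
  set x : Fin m := ⟨k, by omega⟩
  set y : Fin m := ⟨k + 1, by omega⟩
  set z : Fin m := ⟨k + 2, by omega⟩
  have hxy : x ≠ y := by simp [x, y, Fin.ext_iff]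
  have hxz : x ≠ z := by simp [x, z, Fin.ext_iff]
  have hzy : z ≠ y := by simp [z, y, Fin.ext_iff]
  have h1 : Equiv.swap y z * Equiv.swap x y * Equiv.swap y z = Equiv.swap z x :=
    Equiv.swap_mul_swap_mul_swap hxy hxz
  have h2 : Equiv.swap y x * Equiv.swap z y * Equiv.swap y x = Equiv.swap x z :=
    Equiv.swap_mul_swap_mul_swap hzy hxz.symm
  rw [Equiv.swap_comm y x, Equiv.swap_comm z y] at h2
  rw [h2, h1, Equiv.swap_comm]

section GroupCalc
variable {G : Type*} [Group G] {a b c : G}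
  (hab : a * b * a = b * a * b) (hbc : b * c * b = c * b * c) (hac : a * c = c * a)

include hac in
lemma gc_C : ∀ x : G, a * (c * x) = c * (a * x) := fun x => by
  rw [← mul_assoc, hac, mul_assoc]

include hab in
lemma gc_A : ∀ x : G, a * (b * (a * x)) = b * (a * (b * x)) := fun x => by
  rw [← mul_assoc, ← mul_assoc, hab, mul_assoc, mul_assoc]

include hbc in
lemma gc_B : ∀ x : G, b * (c * (b * x)) = c * (b * (c * x)) := fun x => by
  rw [← mul_assoc, ← mul_assoc, hbc, mul_assoc, mul_assoc]

include hab in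
lemma gc1 : a * (b * a) = b * (a * b) := by rw [← mul_assoc, hab, mul_assoc]

include hbc in
lemma gc2 : b * (c * b) = c * (b * c) := by rw [← mul_assoc, hbc, mul_assoc]

include hab hbc hac in
lemma gc3 : b * (a * (c * (b * a))) = c * (b * (a * (c * b))) := by
  rw [gc_C hac (b * a)]
  rw [show b * (c * (a * (b * a))) = b * (c * (b * (a * b))) by rw [gc1 hab]]
  rw [gc_B hbc (a * b), gc_C hac b]

include hab hbc hac in
lemma gc4 : a * (b * (c * (b * a))) = c * (b * (a * (b * c))) := by
  rw [gc_B hbc a, gc_C hac (b * (c * a)), show c * a = a * c from hac.symm, gc_A hab c]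

include hab hbc hac in
lemma gc5 : a * (b * (c * (a * b))) = b * (c * (a * (b * c))) := by
  rw [show c * (a * b) = a * (c * b) from (gc_C hac b).symm, gc_A hab (c * b),
    gc2 hbc, gc_C hac (b * c)]

end GroupCalc

/-- `ζ` respects the braid relation: for `0 ≤ i ≤ n` and `0 ≤ j ≤ n-2`, moving `∂_i^n`
through `χ_j^n χ_{j+1}^n χ_j^n` gives the same pair (element of `S_{n+2}`, `∂`-generator)
as moving it through `χ_{j+1}^n χ_j^n χ_{j+1}^n`. -/
theorem zeta_respects_braid (n i j : ℕ) (hi : i ≤ n) (hj : j + 2 ≤ n) :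
    zetaWord n i [j, j + 1, j] = zetaWord n i [j + 1, j, j + 1] := by
  have e1 : j + 2 - 1 = j + 1 := rfl
  have e2 : j + 1 + 1 = j + 2 := rfl
  have hab := swapF_braid (n + 2) j (by omega)
  have hbc := swapF_braid (n + 2) (j + 1) (by omega)
  have hac := swapF_comm (n + 2) j (j + 2) (by omega)
  rw [e2] at hbc
  rcases Nat.lt_trichotomy i j with h | h | h
  · simp only [zetaWord, zetaStep, if_pos h, if_pos (by omega : i < j + 1), mul_one, e2,
      Prod.mk.injEq, if_true, if_false, e1, eq_self_iff_true, and_true]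
    exact gc2 hbc
  · subst h
    simp only [zetaWord, zetaStep, if_neg (lt_irrefl i), if_pos rfl,
      if_pos (by omega : i < i + 1), if_neg (by omega : ¬ i + 1 < i),
      if_neg (by omega : ¬ i + 2 < i), if_neg (by omega : ¬ i + 2 = i),
      if_neg (by omega : ¬ i + 2 = i + 1), if_neg (by omega : ¬ i + 1 < i + 1),
      if_neg (by omega : ¬ i + 1 = i + 1 + 1), mul_one, e2, Prod.mk.injEq, if_true, if_false, e1, eq_self_iff_true, and_true, mul_assoc]
    exact gc3 hab hbc hac
  · rcases Nat.lt_or_ge i (j + 2) with h2 | h2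
    · have : i = j + 1 := by omega
      subst this
      simp only [zetaWord, zetaStep, if_neg (by omega : ¬ j + 1 < j),
        if_neg (by omega : ¬ j + 1 = j), if_pos rfl, Nat.add_sub_cancel,
        if_pos (by omega : j < j + 1), if_neg (lt_irrefl j),
        if_neg (by omega : ¬ j + 1 < j + 1), if_neg (by omega : ¬ j + 2 < j),
        if_neg (by omega : ¬ j + 2 = j), if_neg (by omega : ¬ j + 2 = j + 1),
        if_neg (by omega : ¬ j + 2 < j + 1), mul_one, e2, Prod.mk.injEq, if_true, if_false, e1, eq_self_iff_true, and_true, mul_assoc]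
      exact gc4 hab hbc hac
    · rcases Nat.lt_or_ge i (j + 3) with h3 | h3
      · have : i = j + 2 := by omega
        subst this
        simp only [zetaWord, zetaStep, if_neg (by omega : ¬ j + 2 < j),
          if_neg (by omega : ¬ j + 2 = j), if_neg (by omega : ¬ j + 2 = j + 1),
          if_neg (by omega : ¬ j + 2 < j + 1), if_pos rfl, Nat.add_sub_cancel,
          if_neg (by omega : ¬ j + 1 < j), if_neg (by omega : ¬ j + 1 = j),
          if_pos (by omega : j < j + 1), if_neg (lt_irrefl j), mul_one, e2,
          Prod.mk.injEq, if_true, if_false, e1, eq_self_iff_true, and_true, mul_assoc]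
        exact gc5 hab hbc hac
      · simp only [zetaWord, zetaStep, if_neg (by omega : ¬ i < j), if_neg (by omega : ¬ i = j),
          if_neg (by omega : ¬ i = j + 1), if_neg (by omega : ¬ i < j + 1),
          if_neg (by omega : ¬ i = j + 1 + 1), mul_one, Prod.mk.injEq, if_true, if_false, e1, eq_self_iff_true, and_true]
        exact gc1 hab
end

section
/- With ζ as defined, ζ respects the involution relation of the symmetric group: for all 0 ≤ i ≤ n and 0 ≤ j ≤ n−1, applying ζ to ∂_i^n successively through χ_j^n χ_j^n yields (1, ∂_i^n), i.e., the resulting element of S_{n+2} is the identity and the ∂-generator is unchanged. -/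
/-- `ζ` respects the involution relation `χ_j² = 1` of the symmetric group: for `0 ≤ i ≤ n`
and `0 ≤ j ≤ n-1`, moving `∂_i^n` through `χ_j^n χ_j^n` yields the identity of `S_{n+2}` and
leaves the `∂`-generator unchanged. -/
theorem zeta_respects_involution (n i j : ℕ) (hi : i ≤ n) (hj : j + 1 ≤ n) :
    zetaWord n i [j, j] = (1, i) := by
  have hsq : ∀ k, swapF (n + 2) k * swapF (n + 2) k = 1 := by
    intro k
    unfold swapF
    split
    · exact Equiv.swap_mul_self _ _
    · simp
  have key : ∀ a b, zetaWord n a [b, b] =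
      ((zetaStep n a b).1 * (zetaStep n (zetaStep n a b).2 b).1,
        (zetaStep n (zetaStep n a b).2 b).2) := by
    intro a b
    simp [zetaWord]
  rw [key]
  rcases lt_trichotomy i j with h | h | h
  · have e : zetaStep n i j = (swapF (n + 2) (j + 1), i) := by
      simp [zetaStep, h]
    rw [e]
    simp [e, hsq]
  · subst h
    have e1 : zetaStep n i i = (swapF (n + 2) (i + 1) * swapF (n + 2) i, i + 1) := by
      simp [zetaStep]
    have e2 : zetaStep n (i + 1) i = (swapF (n + 2) i * swapF (n + 2) (i + 1), i) := by
      have : ¬ (i + 1 < i) := by omega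
      have h2 : ¬ (i + 1 = i) := by omega
      simp [zetaStep, this, h2]
    rw [e1, e2]
    refine Prod.ext ?_ rfl
    show swapF (n + 2) (i + 1) * swapF (n + 2) i *
      (swapF (n + 2) i * swapF (n + 2) (i + 1)) = 1
    rw [mul_assoc, ← mul_assoc (swapF (n + 2) i), hsq, one_mul, hsq]
  · rcases eq_or_lt_of_le (Nat.succ_le_of_lt h) with h3 | h3
    · have h3' : i = j + 1 := h3.symm
      subst h3'
      have e1 : zetaStep n (j + 1) j = (swapF (n + 2) j * swapF (n + 2) (j + 1), j) := by
        have h1 : ¬ (j + 1 < j) := by omega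
        have h2 : ¬ (j + 1 = j) := by omega
        simp [zetaStep, h1, h2]
      have e2 : zetaStep n j j = (swapF (n + 2) (j + 1) * swapF (n + 2) j, j + 1) := by
        simp [zetaStep]
      rw [e1, e2]
      refine Prod.ext ?_ rfl
      show swapF (n + 2) j * swapF (n + 2) (j + 1) *
        (swapF (n + 2) (j + 1) * swapF (n + 2) j) = 1
      rw [mul_assoc, ← mul_assoc (swapF (n + 2) (j + 1)), hsq, one_mul, hsq]
    · have e : zetaStep n i j = (swapF (n + 2) j, i) := by
        have h1 : ¬ i < j := by omega
        have h2 : ¬ i = j := by omega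
        have h4 : ¬ i = j + 1 := by omega
        simp [zetaStep, h1, h2, h4]
      rw [e]
      simp [e, hsq]
end
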